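/- arXiv:1805.07630 — 9 statements merged into one kernel-verified Lean document; each statement's English description precedes it below -/
import Mathlib

section
/- The inverse limit of an inverse system of residually finite quandles is a residually finite quandle. -/
open Quandles

def ResiduallyFiniteQuandle (Q : Type*) [Quandle Q] : Prop :=
  ∀ x y : Q, x ≠ y →
    ∃ (F : Type) (_ : Quandle F) (_ : Fintype F) (φ : Q →◃ F), φ x ≠ φ y

/-- A homomorphism of racks also preserves the inverse action. -/
theorem ShelfHom.map_invAct {R S : Type*} [Rack R] [Rack S] (f : R →◃ S)
    (x y : R) : f (x ◃⁻¹ y) = f x ◃⁻¹ f y := by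
  have h : f x ◃ f (x ◃⁻¹ y) = f y := by
    rw [← ShelfHom.map_act]
    exact congrArg f (Rack.right_inv x y)
  calc f (x ◃⁻¹ y) = f x ◃⁻¹ f x ◃ f (x ◃⁻¹ y) := (Rack.invAct_act_eq _ _).symm
    _ = f x ◃⁻¹ f y := by rw [h]

/-- The inverse limit of an inverse system of quandles, as a subquandle of the
product consisting of the compatible tuples. -/
def InverseLimit.quandle {I : Type*} [Preorder I] (X : I → Type*)
    [∀ i, Quandle (X i)] (π : ∀ {i j : I}, i ≤ j → (X j →◃ X i)) :
    Quandle {x : ∀ i, X i // ∀ (i j : I) (h : i ≤ j), π h (x j) = x i} where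
  act x y := ⟨fun i => x.1 i ◃ y.1 i, by
    intro i j h
    rw [ShelfHom.map_act, x.2 i j h, y.2 i j h]⟩
  self_distrib := by
    intro x y z
    exact Subtype.ext (funext fun i => Shelf.self_distrib)
  invAct x y := ⟨fun i => x.1 i ◃⁻¹ y.1 i, by
    intro i j h
    rw [ShelfHom.map_invAct, x.2 i j h, y.2 i j h]⟩
  left_inv x y := Subtype.ext (funext fun i => Rack.left_inv (x.1 i) (y.1 i))
  right_inv x y := Subtype.ext (funext fun i => Rack.right_inv (x.1 i) (y.1 i))
  fix := by
    intro x
    exact Subtype.ext (funext fun i => Quandle.fix)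

theorem ResiduallyFiniteQuandle.of_separating_homs {Q : Type*} [Quandle Q] {ι : Type*}
    {Y : ι → Type*} [∀ i, Quandle (Y i)] (hY : ∀ i, ResiduallyFiniteQuandle (Y i))
    (f : ∀ i, Q →◃ Y i) (hf : ∀ x y : Q, x ≠ y → ∃ i, f i x ≠ f i y) :
    ResiduallyFiniteQuandle Q := by
  intro x y hxy
  obtain ⟨i, hi⟩ := hf x y hxy
  obtain ⟨F, instF, finF, φ, hφ⟩ := hY i (f i x) (f i y) hi
  exact ⟨F, instF, finF, φ.comp (f i), hφ⟩

namespace InverseLimit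

variable {I : Type*} [Preorder I] (X : I → Type*) [∀ i, Quandle (X i)]
  (π : ∀ {i j : I}, i ≤ j → (X j →◃ X i))

attribute [local instance] InverseLimit.quandle

def proj (i : I) : {x : ∀ i, X i // ∀ (i j : I) (h : i ≤ j), π h (x j) = x i} →◃ X i where
  toFun x := x.1 i
  map_act' := rfl

theorem exists_proj_ne {x y : {x : ∀ i, X i // ∀ (i j : I) (h : i ≤ j), π h (x j) = x i}}
    (hxy : x ≠ y) : ∃ i, proj X π i x ≠ proj X π i y :=
  Function.ne_iff.mp fun h => hxy (Subtype.ext h)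

end InverseLimit

theorem inverseLimit_residually_finite_general {I : Type*} [Preorder I]
    (X : I → Type*) [∀ i, Quandle (X i)]
    (π : ∀ {i j : I}, i ≤ j → (X j →◃ X i))
    (hrf : ∀ i, ResiduallyFiniteQuandle (X i)) :
    @ResiduallyFiniteQuandle _ (InverseLimit.quandle X π) :=
  letI := InverseLimit.quandle X π
  ResiduallyFiniteQuandle.of_separating_homs hrf (InverseLimit.proj X π)
    fun _ _ => InverseLimit.exists_proj_ne X π

/-- The inverse limit of an inverse system of residually finite quandles is
residually finite. -/
theorem inverseLimit_residually_finite {I : Type*} [Preorder I]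
    [IsDirected I (· ≤ ·)] (X : I → Type*) [∀ i, Quandle (X i)]
    (π : ∀ {i j : I}, i ≤ j → (X j →◃ X i))
    (hid : ∀ i : I, π (le_refl i) = ShelfHom.id (X i))
    (hcomp : ∀ (i j k : I) (hij : i ≤ j) (hjk : j ≤ k),
      (π hij).comp (π hjk) = π (hij.trans hjk))
    (hrf : ∀ i, ResiduallyFiniteQuandle (X i)) :
    @ResiduallyFiniteQuandle _ (InverseLimit.quandle X π) :=
  inverseLimit_residually_finite_general X π hrf
end

section
/- If G is a residually finite group, then the conjugation quandle Conj(G) (with operation a * b = b⁻¹ a b) is a residually finite quandle. -/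
open Quandles

def ResiduallyFiniteGroup (G : Type*) [Group G] : Prop :=
  ∀ g : G, g ≠ 1 →
    ∃ (F : Type) (_ : Group F) (_ : Fintype F) (φ : G →* F), φ g ≠ 1

theorem ResiduallyFiniteGroup.exists_monoidHom_apply_ne {G : Type*} [Group G]
    (hG : ResiduallyFiniteGroup G) {x y : G} (hxy : x ≠ y) :
    ∃ (F : Type) (_ : Group F) (_ : Fintype F) (φ : G →* F), φ x ≠ φ y := by
  obtain ⟨F, _, _, φ, hφ⟩ := hG (x * y⁻¹) (mul_inv_eq_one.not.mpr hxy)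
  refine ⟨F, inferInstance, inferInstance, φ, fun h => hφ ?_⟩
  rw [map_mul, map_inv, h, mul_inv_cancel]

/-- The conjugation quandle of a residually finite group is a residually
finite quandle. -/
theorem conj_residually_finite (G : Type*) [Group G]
    (hG : ResiduallyFiniteGroup G) :
    ResiduallyFiniteQuandle (Quandle.Conj G) := by
  intro x y hxy
  obtain ⟨F, _, _, φ, hφ⟩ := hG.exists_monoidHom_apply_ne hxy
  exact ⟨Quandle.Conj F, inferInstance, inferInstance, Quandle.Conj.map φ, hφ⟩
end

section
/- Let G be a residually finite group and α : G → G an inner automorphism. Then the generalized Alexander quandle Alex(G, α), i.e., the set G with operation a * b = α(a b⁻¹) b, is residually finite. -/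
/-!
Two distinct elements `x ≠ y` of `G` are separated by a homomorphism `f : G →* F` to a finite
group. If `α` is conjugation by `g₀`, then `f` intertwines `α` with conjugation by `f g₀`, and a
group homomorphism intertwining two automorphisms is a homomorphism of the corresponding
Alexander quandles. So `f` is a quandle map `Alex(G, α) → Alex(F, conj (f g₀))` separating `x`
and `y`.
-/

open Quandles

/-- The generalized Alexander quandle of a group `G` with an automorphism `φ`:
the underlying set of `G` with the operation `a * b = φ(a b⁻¹) b` (here
written with the acting element second, i.e. `x ◃ y = φ(y x⁻¹) x`). -/
def alexanderQuandle (G : Type*) [Group G] (φ : G ≃* G) : Quandle G where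
  act x y := φ (y * x⁻¹) * x
  self_distrib := by
    intro x y z
    show φ ((φ (z * y⁻¹) * y) * x⁻¹) * x
        = φ ((φ (z * x⁻¹) * x) * (φ (y * x⁻¹) * x)⁻¹) * (φ (y * x⁻¹) * x)
    simp only [map_mul, map_inv, mul_inv_rev, inv_inv, mul_assoc, inv_mul_cancel_left,
      mul_inv_cancel_left, mul_inv_cancel, mul_one]
  invAct x y := φ.symm (y * x⁻¹) * x
  left_inv x y := by
    show φ.symm ((φ (y * x⁻¹) * x) * x⁻¹) * x = y
    simp
  right_inv x y := by
    show φ ((φ.symm (y * x⁻¹) * x) * x⁻¹) * x = y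
    simp
  fix := by
    intro x
    show φ (x * x⁻¹) * x = x
    simp

theorem ResiduallyFiniteGroup.exists_hom_ne {G : Type*} [Group G] (hG : ResiduallyFiniteGroup G)
    {x y : G} (hxy : x ≠ y) :
    ∃ (F : Type) (_ : Group F) (_ : Fintype F) (f : G →* F), f x ≠ f y := by
  obtain ⟨F, iF, hF, f, hf⟩ := hG (x * y⁻¹) (mt mul_inv_eq_one.mp hxy)
  exact ⟨F, iF, hF, f, fun h => hf (by rw [map_mul, map_inv, h, mul_inv_cancel])⟩

def alexanderQuandleHom {G H : Type*} [Group G] [Group H] {φ : G ≃* G} {ψ : H ≃* H}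
    (f : G →* H) (hf : ∀ x, f (φ x) = ψ (f x)) :
    @ShelfHom G H (alexanderQuandle G φ).toShelf (alexanderQuandle H ψ).toShelf :=
  @ShelfHom.mk G H (alexanderQuandle G φ).toShelf (alexanderQuandle H ψ).toShelf f
    fun {x y} => show f (φ (y * x⁻¹) * x) = ψ (f y * (f x)⁻¹) * f x by
      rw [map_mul, hf, map_mul, map_inv]

theorem MonoidHom.map_conj {G H : Type*} [Group G] [Group H] (f : G →* H) (g x : G) :
    f (MulAut.conj g x) = MulAut.conj (f g) (f x) := by
  simp only [MulAut.conj_apply, map_mul, map_inv]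

/-- If `G` is a residually finite group and `α` is an inner automorphism of
`G`, then the generalized Alexander quandle `Alex(G, α)` is residually
finite. -/
theorem alexander_residually_finite (G : Type*) [Group G]
    (hG : ResiduallyFiniteGroup G) (α : G ≃* G)
    (hα : ∃ g₀ : G, ∀ x : G, α x = g₀ * x * g₀⁻¹) :
    @ResiduallyFiniteQuandle G (alexanderQuandle G α) := by
  obtain ⟨g₀, hg₀⟩ := hα
  obtain rfl : α = MulAut.conj g₀ := MulEquiv.ext hg₀
  intro x y hxy
  obtain ⟨F, _, hF, f, hf⟩ := hG.exists_hom_ne hxy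
  exact ⟨F, alexanderQuandle F (MulAut.conj (f g₀)), hF,
    alexanderQuandleHom f (f.map_conj g₀), by exact hf⟩
end

section
/- The map Φ from the free quandle FQ(S) on a set S to the conjugation quandle Conj(F(S)) of the free group F(S), sending the class of a^w (a ∈ S, w ∈ F(S)) to w⁻¹ a w, is an injective quandle homomorphism. -/
/-!
Φ respects the operation because `toGroup (p ◃ q)` is the conjugate of `toGroup q` by
`toGroup p`. For injectivity, suppose `w a w⁻¹ = u b u⁻¹` in `F(S)`. Abelianizing shows
`a = b`, so `u⁻¹ w` centralizes the generator `a`; in a free group the centralizer of a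
generator is the cyclic group it generates, so `w = u aⁿ`, and `(a, u aⁿ) ~ (a, u)` is
`n` applications of the defining relation of the free quandle.
-/

open Quandles

/-- The free rack on a set `S`: pairs `(a, w)` (thought of as the conjugate
`w a w⁻¹` of the generator `a`), following Fenn–Rourke. -/
def FreeRack (S : Type u) : Type u := S × FreeGroup S

namespace FreeRack

variable {S : Type u}

/-- The element of the free group represented by the pair `(a, w)`,
namely the conjugate `w a w⁻¹` of the generator `a`. -/
def toGroup (x : FreeRack S) : FreeGroup S := x.2 * FreeGroup.of x.1 * x.2⁻¹

instance : Rack (FreeRack S) where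
  act x y := (y.1, toGroup x * y.2)
  self_distrib := by
    rintro ⟨a, w⟩ ⟨b, u⟩ ⟨c, v⟩
    refine Prod.ext rfl ?_
    show toGroup (a, w) * (toGroup (b, u) * v)
        = toGroup (b, toGroup (a, w) * u) * (toGroup (a, w) * v)
    simp only [toGroup]
    group
  invAct x y := (y.1, (toGroup x)⁻¹ * y.2)
  left_inv x y := by
    refine Prod.ext rfl ?_
    show (toGroup x)⁻¹ * (toGroup x * y.2) = y.2
    group
  right_inv x y := by
    refine Prod.ext rfl ?_
    show toGroup x * ((toGroup x)⁻¹ * y.2) = y.2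
    group

/-- The defining relation of the free quandle as a quotient of the free rack:
`(a, w) ~ (a, w · a)`. -/
def rel (p q : FreeRack S) : Prop := q = (p.1, p.2 * FreeGroup.of p.1)

theorem toGroup_of_rel {p q : FreeRack S} (h : rel p q) : toGroup p = toGroup q := by
  subst h
  rcases p with ⟨a, w⟩
  simp only [toGroup]
  group

theorem toGroup_of_eqvGen {p q : FreeRack S} (h : Relation.EqvGen rel p q) :
    toGroup p = toGroup q := by
  induction h with
  | rel a b hab => exact toGroup_of_rel hab
  | refl a => rfl
  | symm a b _ ih => exact ih.symm
  | trans a b c _ _ ih1 ih2 => exact ih1.trans ih2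

theorem fst_of_eqvGen {p q : FreeRack S} (h : Relation.EqvGen rel p q) : p.1 = q.1 := by
  induction h with
  | rel a b hab => rw [hab]
  | refl a => rfl
  | symm a b _ ih => exact ih.symm
  | trans a b c _ _ ih1 ih2 => exact ih1.trans ih2

/-- The setoid generated by the relation `(a, w) ~ (a, w · a)`. -/
instance setoid (S : Type u) : Setoid (FreeRack S) :=
  ⟨Relation.EqvGen rel, Relation.EqvGen.is_equivalence rel⟩

theorem act_eqvGen_right (p : FreeRack S) {q q' : FreeRack S}
    (h : Relation.EqvGen rel q q') : Relation.EqvGen rel (p ◃ q) (p ◃ q') := by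
  induction h with
  | rel a b hab =>
      refine Relation.EqvGen.rel _ _ ?_
      rw [hab]
      refine Prod.ext rfl ?_
      show toGroup p * (a.2 * FreeGroup.of a.1) = toGroup p * a.2 * FreeGroup.of a.1
      group
  | refl a => exact Relation.EqvGen.refl _
  | symm a b _ ih => exact Relation.EqvGen.symm _ _ ih
  | trans a b c _ _ ih1 ih2 => exact Relation.EqvGen.trans _ _ _ ih1 ih2

theorem act_eq_of_eqvGen_left {p p' : FreeRack S} (q : FreeRack S)
    (h : Relation.EqvGen rel p p') : p ◃ q = p' ◃ q := by
  show (q.1, toGroup p * q.2) = (q.1, toGroup p' * q.2)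
  rw [toGroup_of_eqvGen h]

theorem invAct_eqvGen_right (p : FreeRack S) {q q' : FreeRack S}
    (h : Relation.EqvGen rel q q') : Relation.EqvGen rel (p ◃⁻¹ q) (p ◃⁻¹ q') := by
  induction h with
  | rel a b hab =>
      refine Relation.EqvGen.rel _ _ ?_
      rw [hab]
      refine Prod.ext rfl ?_
      show (toGroup p)⁻¹ * (a.2 * FreeGroup.of a.1) = (toGroup p)⁻¹ * a.2 * FreeGroup.of a.1
      group
  | refl a => exact Relation.EqvGen.refl _
  | symm a b _ ih => exact Relation.EqvGen.symm _ _ ih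
  | trans a b c _ _ ih1 ih2 => exact Relation.EqvGen.trans _ _ _ ih1 ih2

theorem invAct_eq_of_eqvGen_left {p p' : FreeRack S} (q : FreeRack S)
    (h : Relation.EqvGen rel p p') : p ◃⁻¹ q = p' ◃⁻¹ q := by
  show (q.1, (toGroup p)⁻¹ * q.2) = (q.1, (toGroup p')⁻¹ * q.2)
  rw [toGroup_of_eqvGen h]

end FreeRack

/-- The free quandle on a set `S`: the quotient of the free rack on `S` by the
equivalence relation generated by `(a, w) ~ (a, w · a)`. -/
def FreeQuandle (S : Type u) : Type u := Quotient (FreeRack.setoid S)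

namespace FreeQuandle

variable {S : Type u}

instance : Quandle (FreeQuandle S) where
  act := Quotient.map₂ Shelf.act (by
    intro p p' hp q q' hq
    calc Shelf.act p q = Shelf.act p' q := FreeRack.act_eq_of_eqvGen_left q hp
    _ ≈ Shelf.act p' q' := FreeRack.act_eqvGen_right p' hq)
  self_distrib := by
    intro x y z
    refine Quotient.inductionOn₃ x y z (fun p q r => ?_)
    exact congrArg (Quotient.mk _) Shelf.self_distrib
  invAct := Quotient.map₂ Rack.invAct (by
    intro p p' hp q q' hq
    calc Rack.invAct p q = Rack.invAct p' q := FreeRack.invAct_eq_of_eqvGen_left q hp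
    _ ≈ Rack.invAct p' q' := FreeRack.invAct_eqvGen_right p' hq)
  left_inv := by
    intro x y
    refine Quotient.inductionOn₂ x y (fun p q => ?_)
    exact congrArg (Quotient.mk _) (Rack.left_inv p q)
  right_inv := by
    intro x y
    refine Quotient.inductionOn₂ x y (fun p q => ?_)
    exact congrArg (Quotient.mk _) (Rack.right_inv p q)
  fix := by
    intro x
    refine Quotient.inductionOn x (fun p => ?_)
    refine Quotient.sound ?_
    refine Relation.EqvGen.trans _ _ _ (Relation.EqvGen.refl _) ?_
    have h : p ◃ p = (p.1, p.2 * FreeGroup.of p.1) := by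
      refine Prod.ext rfl ?_
      show FreeRack.toGroup p * p.2 = p.2 * FreeGroup.of p.1
      simp only [FreeRack.toGroup]
      group
    rw [h]
    exact Relation.EqvGen.symm _ _ (Relation.EqvGen.rel _ _ rfl)

/-- The canonical inclusion of the generating set into the free quandle. -/
def of (a : S) : FreeQuandle S := Quotient.mk _ (a, 1)

/-- The natural map from the free quandle on `S` into the conjugation quandle
of the free group on `S`, sending the class of `(a, w)` to the conjugate
`w a w⁻¹` of the generator `a`. -/
def toConj : FreeQuandle S → Quandle.Conj (FreeGroup S) :=
  Quotient.lift FreeRack.toGroup (fun _ _ h => FreeRack.toGroup_of_eqvGen h)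

end FreeQuandle

namespace FreeGroup

variable {α : Type*}

theorem eq_of_isConj_of {a b : α} (h : IsConj (of a) (of b)) : a = b :=
  FreeAbelianGroup.of_injective <| congrArg Additive.ofMul <|
    isConj_iff_eq.mp (Abelianization.of.map_isConj h)

theorem mk_mem_zpowers_of_commute [DecidableEq α] {a : α} {L : List (α × Bool)}
    (hL : IsReduced L) (hcomm : Commute (mk L) (of a)) : mk L ∈ Subgroup.zpowers (of a) := by
  induction L with
  | nil => exact one_mem _
  | cons x L ih =>
    obtain ⟨b, t⟩ := x
    have hsplit : mk ((b, t) :: L) = mk [(b, t)] * mk L := by rw [mul_mk]; rfl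
    by_cases hb : b = a
    · subst hb
      have hletter : mk [(b, t)] ∈ Subgroup.zpowers (of b) := by
        cases t
        · exact inv_mem (Subgroup.mem_zpowers _)
        · exact Subgroup.mem_zpowers _
      have hletter_comm : Commute (mk [(b, t)]) (of b) := by
        obtain ⟨n, hn⟩ := Subgroup.mem_zpowers_iff.mp hletter
        exact hn ▸ Commute.zpow_left (Commute.refl _) n
      rw [hsplit] at hcomm ⊢
      refine mul_mem hletter (ih (hL.infix (List.suffix_cons _ _).isInfix) ?_)
      have hcomm' := hletter_comm.inv_left.mul_left hcomm
      rwa [inv_mul_cancel_left] at hcomm'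
    · -- `a · mk L` is reduced of length `|L| + 1`, while `mk L · a` is a subword of `L ++ [a]`;
      -- their equality forces `L` to begin with the letter `a`.
      exfalso
      have hleft : (of a * mk ((b, t) :: L)).toWord = (a, true) :: (b, t) :: L := by
        rw [of, mul_mk, toWord_mk]
        exact (isReduced_cons_cons.mpr ⟨fun h => absurd h.symm hb, hL⟩).reduce_eq
      have hright := toWord_mul_sublist (mk ((b, t) :: L)) (of a)
      rw [hcomm.eq, hleft, toWord_mk, hL.reduce_eq, toWord_of] at hright
      have hwords := hright.eq_of_length (by simp)
      simp only [List.cons_append, List.cons.injEq, Prod.mk.injEq] at hwords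
      exact hb hwords.1.1.symm

theorem centralizer_of (a : α) :
    Subgroup.centralizer {of a} = Subgroup.zpowers (of a) := by
  classical
  refine le_antisymm (fun g hg => ?_)
    (Subgroup.zpowers_le.mpr (Subgroup.mem_centralizer_singleton_iff.mpr rfl))
  rw [← mk_toWord (x := g)]
  refine mk_mem_zpowers_of_commute isReduced_toWord ?_
  rw [mk_toWord]
  exact Subgroup.mem_centralizer_singleton_iff.mp hg

end FreeGroup

namespace FreeRack

variable {S : Type u}

theorem toGroup_act (p q : FreeRack S) :
    toGroup (p ◃ q) = toGroup p * toGroup q * (toGroup p)⁻¹ := by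
  show toGroup (q.1, toGroup p * q.2) = _
  simp only [toGroup]
  group

theorem eqvGen_rel_mul_zpow (a : S) (u : FreeGroup S) (n : ℤ) :
    Relation.EqvGen rel (a, u) (a, u * FreeGroup.of a ^ n) := by
  induction n using Int.induction_on with
  | zero => simpa using Relation.EqvGen.refl _
  | succ k ih =>
    refine ih.trans _ _ _ (Relation.EqvGen.rel _ _ ?_)
    show (a, _) = (a, _)
    rw [zpow_add_one, mul_assoc]
  | pred k ih =>
    refine ih.trans _ _ _ (Relation.EqvGen.symm _ _ (Relation.EqvGen.rel _ _ ?_))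
    show (a, _) = (a, _)
    dsimp only
    group

theorem eqvGen_rel_of_toGroup_eq {p q : FreeRack S} (h : toGroup p = toGroup q) :
    Relation.EqvGen rel p q := by
  obtain ⟨a, w⟩ := p
  obtain ⟨b, u⟩ := q
  change w * FreeGroup.of a * w⁻¹ = u * FreeGroup.of b * u⁻¹ at h
  have hconj : (u⁻¹ * w) * FreeGroup.of a * (u⁻¹ * w)⁻¹ = FreeGroup.of b := by
    calc (u⁻¹ * w) * FreeGroup.of a * (u⁻¹ * w)⁻¹ = u⁻¹ * (w * FreeGroup.of a * w⁻¹) * u := by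
          group
      _ = FreeGroup.of b := by rw [h]; group
  obtain rfl : a = b := FreeGroup.eq_of_isConj_of (isConj_iff.mpr ⟨_, hconj⟩)
  have hcent : u⁻¹ * w ∈ Subgroup.centralizer {FreeGroup.of a} :=
    Subgroup.mem_centralizer_singleton_iff.mpr (mul_inv_eq_iff_eq_mul.mp hconj)
  rw [FreeGroup.centralizer_of] at hcent
  obtain ⟨n, hn⟩ := Subgroup.mem_zpowers_iff.mp hcent
  obtain rfl : w = u * FreeGroup.of a ^ n := by rw [hn]; group
  exact (eqvGen_rel_mul_zpow a u n).symm

end FreeRack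

namespace FreeQuandle

variable {S : Type u}

theorem toConj_act (x y : FreeQuandle S) : toConj (x ◃ y) = toConj x ◃ toConj y := by
  induction x, y using Quotient.inductionOn₂ with
  | h p q => exact (FreeRack.toGroup_act p q).trans (Quandle.conj_act_eq_conj _ _).symm

theorem toConj_injective : Function.Injective (toConj : FreeQuandle S → _) := by
  intro x y h
  induction x, y using Quotient.inductionOn₂ with
  | h p q => exact Quotient.sound (FreeRack.eqvGen_rel_of_toGroup_eq h)

end FreeQuandle

/-- The map `Φ : FQ(S) → Conj(F(S))`, sending the class of `(a, w)` to the
conjugate of the generator `a` by `w`, is an injective quandle homomorphism. -/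
theorem freeQuandle_toConj_injective_hom (S : Type) :
    Function.Injective (FreeQuandle.toConj : FreeQuandle S → Quandle.Conj (FreeGroup S)) ∧
    (∀ x y : FreeQuandle S,
      FreeQuandle.toConj (x ◃ y) = FreeQuandle.toConj x ◃ FreeQuandle.toConj y) ∧
    (∀ (a : S) (w : FreeGroup S),
      FreeQuandle.toConj (Quotient.mk (FreeRack.setoid S) (a, w))
        = w * FreeGroup.of a * w⁻¹) := by
  exact ⟨FreeQuandle.toConj_injective, FreeQuandle.toConj_act, fun _ _ => rfl⟩
end

section
/- Every finitely generated residually finite quandle is Hopfian: every surjective quandle endomorphism is injective (hence an automorphism). -/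
/-! If `ψ` separates `a ≠ b` with `φ a = φ b`, look at the homomorphisms `ψ ∘ φⁿ` into the finite
quandle `F`. A finitely generated quandle has only finitely many homomorphisms into `F`, since
they are determined by their values on the generators, so `ψ ∘ φⁿ = ψ ∘ φⁿ⁺ᵏ` for some `k > 0`.
As `φⁿ` is surjective this gives `ψ = ψ ∘ φᵏ`, and then `ψ a = ψ (φᵏ a) = ψ (φᵏ b) = ψ b`. -/

open Quandles

/-- A quandle is finitely generated if some finite subset generates it: the
only subset containing it and closed under the operation and its inverse is
the whole quandle. -/
def Quandle.FG (Q : Type*) [Quandle Q] : Prop :=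
  ∃ T : Finset Q, ∀ U : Set Q, ↑T ⊆ U → (∀ x ∈ U, ∀ y ∈ U, x ◃ y ∈ U) →
    (∀ x ∈ U, ∀ y ∈ U, x ◃⁻¹ y ∈ U) → U = Set.univ

namespace ShelfHom

theorem map_invAct_s12 {R S : Type*} [Rack R] [Rack S] (f : R →◃ S) (x y : R) :
    f (x ◃⁻¹ y) = f x ◃⁻¹ f y :=
  (Rack.left_cancel (f x)).mp <| by rw [← f.map_act, Rack.act_invAct_eq, Rack.act_invAct_eq]

def iterate {S : Type*} [Shelf S] (f : S →◃ S) (n : ℕ) : S →◃ S where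
  toFun := (⇑f)^[n]
  map_act' := (Function.Semiconj₂.iterate (op := (· ◃ ·)) (fun _ _ => f.map_act) n) _ _

@[simp]
theorem coe_iterate {S : Type*} [Shelf S] (f : S →◃ S) (n : ℕ) : ⇑(f.iterate n) = (⇑f)^[n] :=
  rfl

end ShelfHom

theorem Quandle.FG.finite_shelfHom {Q S : Type*} [Quandle Q] [Rack S] [Finite S]
    (hQ : Quandle.FG Q) : Finite (Q →◃ S) := by
  obtain ⟨T, hT⟩ := hQ
  refine Finite.of_injective (fun f : Q →◃ S => fun t : T => f t) fun f g hfg => ?_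
  let U : Set Q := {x | f x = g x}
  have hTU : ↑T ⊆ U := fun t ht => congrFun hfg ⟨t, ht⟩
  have hact : ∀ x ∈ U, ∀ y ∈ U, x ◃ y ∈ U := fun x hx y hy => by
    simp only [U, Set.mem_ofPred_eq, ShelfHom.map_act] at hx hy ⊢
    rw [hx, hy]
  have hinvAct : ∀ x ∈ U, ∀ y ∈ U, x ◃⁻¹ y ∈ U := fun x hx y hy => by
    simp only [U, Set.mem_ofPred_eq, ShelfHom.map_invAct_s12] at hx hy ⊢
    rw [hx, hy]
  have hU : U = Set.univ := hT U hTU hact hinvAct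
  exact DFunLike.ext f g fun x => (hU ▸ Set.mem_univ x : x ∈ U)

theorem Quandle.FG.exists_pos_apply_iterate_eq {Q S : Type*} [Quandle Q] [Rack S] [Finite S]
    (hQ : Quandle.FG Q) (ψ : Q →◃ S) {φ : Q →◃ Q} (hφ : Function.Surjective φ) :
    ∃ k, 0 < k ∧ ∀ x, ψ ((⇑φ)^[k] x) = ψ x := by
  have := hQ.finite_shelfHom (S := S)
  obtain ⟨n, m, hnm, hψ⟩ := Set.finite_univ.exists_lt_map_eq_of_forall_mem
    (f := fun n => ψ.comp (φ.iterate n)) fun _ => Set.mem_univ _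
  refine ⟨m - n, Nat.sub_pos_of_lt hnm, fun x => ?_⟩
  obtain ⟨y, rfl⟩ := (hφ.iterate n) x
  have hy := DFunLike.congr_fun hψ y
  simp only [ShelfHom.comp_apply, ShelfHom.coe_iterate] at hy
  rw [← Function.iterate_add_apply, Nat.sub_add_cancel hnm.le, hy]

/-- Every finitely generated residually finite quandle is Hopfian: each
surjective quandle endomorphism is injective. -/
theorem fg_residually_finite_hopfian (Q : Type*) [Quandle Q]
    (hfg : Quandle.FG Q) (hrf : ResiduallyFiniteQuandle Q)
    (φ : Q →◃ Q) (hφ : Function.Surjective φ) : Function.Injective φ := by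
  intro a b hab
  by_contra hne
  obtain ⟨F, _, _, ψ, hψ⟩ := hrf a b hne
  obtain ⟨k, hk, hψφ⟩ := hfg.exists_pos_apply_iterate_eq ψ hφ
  obtain ⟨j, rfl⟩ := Nat.exists_eq_add_of_lt hk
  apply hψ
  rw [← hψφ a, ← hψφ b, Function.iterate_succ_apply, Function.iterate_succ_apply, hab]
end

section
/- Every finitely generated free quandle is Hopfian. -/
open Quandles

/-!
The free group `F(S)` acts on the free quandle by `g • (a, w) = (a, g w)`; the rack action of `x`
is translation by its image `toConj x` in `F(S)`, and the stabiliser of `x` is generated by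
`toConj x`. An endomorphism `φ` is therefore equivariant along the endomorphism `ψ` of `F(S)`
sending `a` to `toConj (φ a)`, and `ψ` maps stabilisers onto stabilisers. If `φ` is onto, so are
`ψ` and the induced self-map of the set `S` of orbits. Since `S` is finite and `F(S)` is finitely
generated and residually finite, both are injective, and then so is `φ`.
-/

open Function

theorem Relation.EqvGen.map {α β : Type*} {r : α → α → Prop} {s : β → β → Prop} (f : α → β)
    (hf : ∀ a b, r a b → s (f a) (f b)) {a b : α} (h : EqvGen r a b) : EqvGen s (f a) (f b) := by
  induction h with
  | rel _ _ h => exact .rel _ _ (hf _ _ h)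
  | refl => exact .refl _
  | symm _ _ _ ih => exact .symm _ _ ih
  | trans _ _ _ _ _ ih₁ ih₂ => exact .trans _ _ _ ih₁ ih₂

section Hopfian

variable {G : Type*} [Group G]

instance Group.FG.finite_monoidHom [Group.FG G] {H : Type*} [Monoid H] [Finite H] :
    Finite (G →* H) := by
  obtain ⟨S, hS⟩ := Group.FG.out (G := G)
  refine Finite.of_injective (fun f : G →* H => fun s : S => f s) fun f g hfg => ?_
  exact MonoidHom.eq_of_eqOn_dense hS fun s hs => congrFun hfg ⟨s, hs⟩

theorem MonoidHom.ker_le_ker_of_surjective {H : Type*} [Group H] [Finite (G →* H)]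
    {ψ : G →* G} (hψ : Surjective ψ) (f : G →* H) : ψ.ker ≤ f.ker := by
  have hinj : Injective fun g : G →* H => g.comp ψ := fun _ _ h => (cancel_right hψ).mp h
  obtain ⟨g, rfl⟩ := Finite.surjective_of_injective hinj f
  intro x hx
  simp [mem_ker.mp hx]

theorem Group.ResiduallyFinite.injective_of_surjective [Group.FG G] [Group.ResiduallyFinite G]
    {ψ : G →* G} (hψ : Surjective ψ) : Injective ψ := by
  rw [← MonoidHom.ker_eq_bot_iff, Subgroup.eq_bot_iff_forall]
  intro x hx
  by_contra hx1
  obtain ⟨H, hxH⟩ := Group.exists_finiteIndexNormalSubgroup_notMem x hx1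
  have := MonoidHom.ker_le_ker_of_surjective hψ (QuotientGroup.mk' H.toSubgroup) hx
  exact hxH (FiniteIndexNormalSubgroup.mem_toSubgroup_iff.mp (by simpa using this))

end Hopfian

theorem Finset.exists_perm_extend_mul_left {G : Type*} [Group G] (P : Finset G) (g : G) :
    ∃ σ : Equiv.Perm P, ∀ p : P, g * p ∈ P → (σ p : G) = g * p :=
  Set.MapsTo.exists_equiv_extend_of_card_eq (Fintype.card_coe P) (s := {p : P | g * p ∈ P})
    (fun _ hp => hp) fun _ _ _ _ h => Subtype.ext (mul_left_cancel h)

namespace FreeGroup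

variable {α : Type*}

theorem lift_mk_apply_of_tails {P : Finset (FreeGroup α)} {σ : α → Equiv.Perm P}
    (hσ : ∀ a (p : P), of a * (p : FreeGroup α) ∈ P → (σ a p : FreeGroup α) = of a * p)
    (L : List (α × Bool)) (p : P) (hL : ∀ M ∈ L.tails, mk M * p ∈ P) :
    (lift σ (mk L) p : FreeGroup α) = mk L * p := by
  induction L with
  | nil => simp [← one_eq_mk]
  | cons x L ih =>
    have hxL : mk (x :: L) = mk [x] * mk L := by rw [mul_mk, List.singleton_append]
    have hq := ih fun M hM => hL M (List.mem_cons_of_mem _ hM)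
    have hxq : mk [x] * ↑(lift σ (mk L) p) ∈ P := by
      rw [hq, ← mul_assoc, ← hxL]
      exact hL _ List.mem_cons_self
    rw [hxL, _root_.map_mul, Equiv.Perm.mul_apply, mul_assoc, ← hq]
    generalize lift σ (mk L) p = q at hxq ⊢
    rcases x with ⟨a, _ | _⟩
    · have hmk : mk [(a, false)] = (of a)⁻¹ := by simp [of, inv_mk, invRev]
      rw [hmk] at hxq ⊢
      rw [_root_.map_inv, lift_apply_of, ← Subtype.coe_mk _ hxq, Subtype.coe_inj,
        Equiv.Perm.inv_eq_iff_eq]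
      exact Subtype.ext (by rw [hσ a _ (by simp)]; simp)
    · exact hσ a q hxq

instance residuallyFinite : Group.ResiduallyFinite (FreeGroup α) := by
  classical
  refine Group.residuallyFinite_of_forall_exists_finite_monoidHom fun w hw => ?_
  -- Left multiplication by the generators, defined on the finite set of suffixes of the word of
  -- `w` and completed to permutations of it, carries `1` to `w`.
  let P : Finset (FreeGroup α) := (w.toWord.tails.map mk).toFinset
  have hP : ∀ M ∈ w.toWord.tails, mk M * 1 ∈ P := fun M hM => by
    simpa [P] using ⟨M, (List.mem_tails _ _).mp hM, rfl⟩
  have h1 : (1 : FreeGroup α) ∈ P := by simpa [← one_eq_mk] using hP [] (by simp)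
  choose σ hσ using fun a => P.exists_perm_extend_mul_left (of a)
  refine ⟨Equiv.Perm P, inferInstance, inferInstance, lift σ, fun hσw => hw ?_⟩
  have := lift_mk_apply_of_tails hσ w.toWord ⟨1, h1⟩ hP
  rwa [mk_toWord, hσw, Equiv.Perm.one_apply, mul_one, eq_comm] at this

end FreeGroup

namespace FreeRack

variable {S : Type*}

theorem exists_zpow_of_eqvGen {p q : FreeRack S} (h : Relation.EqvGen rel p q) :
    ∃ k : ℤ, q.2 = p.2 * FreeGroup.of p.1 ^ k := by
  induction h with
  | rel p q hpq => exact ⟨1, by rw [hpq, zpow_one]⟩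
  | refl p => exact ⟨0, by rw [zpow_zero, mul_one]⟩
  | symm p q hpq ih =>
    obtain ⟨k, hk⟩ := ih
    exact ⟨-k, by rw [hk, fst_of_eqvGen hpq, mul_assoc, ← zpow_add, add_neg_cancel, zpow_zero,
      mul_one]⟩
  | trans p q r hpq _ ih₁ ih₂ =>
    obtain ⟨k, hk⟩ := ih₁
    obtain ⟨l, hl⟩ := ih₂
    exact ⟨k + l, by rw [hl, hk, ← fst_of_eqvGen hpq, mul_assoc, ← zpow_add]⟩

end FreeRack

namespace FreeQuandle

open MulAction

variable {S T : Type*}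

def mk (p : FreeRack S) : FreeQuandle S := Quotient.mk _ p

theorem mk_surjective : Surjective (mk : FreeRack S → FreeQuandle S) :=
  Quotient.mk_surjective

instance : MulAction (FreeGroup S) (FreeQuandle S) where
  smul g := Quotient.map (fun p : FreeRack S => ((p.1, g * p.2) : FreeRack S)) fun _ _ =>
    Relation.EqvGen.map (fun p : FreeRack S => ((p.1, g * p.2) : FreeRack S))
      fun p q (hpq : FreeRack.rel p q) => by rw [hpq]; exact Prod.ext rfl (mul_assoc _ _ _).symm
  one_smul x := by
    obtain ⟨p, rfl⟩ := mk_surjective x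
    exact congrArg mk (Prod.ext rfl (one_mul _))
  mul_smul g h x := by
    obtain ⟨p, rfl⟩ := mk_surjective x
    exact congrArg mk (Prod.ext rfl (mul_assoc _ _ _))

theorem smul_mk (g : FreeGroup S) (a : S) (w : FreeGroup S) : g • mk (a, w) = mk (a, g * w) :=
  rfl

theorem of_eq_mk (a : S) : of a = mk (a, 1) :=
  rfl

theorem mk_eq_smul_of (a : S) (w : FreeGroup S) : mk (a, w) = w • of a := by
  rw [of_eq_mk, smul_mk, mul_one]

theorem exists_smul_of (x : FreeQuandle S) : ∃ (g : FreeGroup S) (a : S), g • of a = x := by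
  obtain ⟨⟨a, w⟩, rfl⟩ := mk_surjective x
  exact ⟨w, a, (mk_eq_smul_of a w).symm⟩

theorem toConj_mk (a : S) (w : FreeGroup S) : toConj (mk (a, w)) = w * FreeGroup.of a * w⁻¹ :=
  rfl

theorem toConj_of (a : S) : toConj (of a) = FreeGroup.of a := by
  rw [of_eq_mk, toConj_mk, one_mul, inv_one, mul_one]

theorem toConj_smul (g : FreeGroup S) (x : FreeQuandle S) :
    toConj (g • x) = g * toConj x * g⁻¹ := by
  obtain ⟨⟨a, w⟩, rfl⟩ := mk_surjective x
  rw [smul_mk, toConj_mk, toConj_mk]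
  group

theorem act_eq_smul (x y : FreeQuandle S) : x ◃ y = toConj x • y := by
  obtain ⟨p, rfl⟩ := mk_surjective x
  obtain ⟨⟨b, u⟩, rfl⟩ := mk_surjective y
  rfl

def fst : FreeQuandle S → S :=
  Quotient.lift Prod.fst fun _ _ => FreeRack.fst_of_eqvGen

theorem fst_of (a : S) : fst (of a) = a :=
  rfl

theorem fst_smul (g : FreeGroup S) (x : FreeQuandle S) : fst (g • x) = fst x := by
  obtain ⟨p, rfl⟩ := mk_surjective x
  rfl

theorem stabilizer_of (a : S) : stabilizer (FreeGroup S) (of a) = Subgroup.zpowers (.of a) := by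
  apply le_antisymm
  · intro g hg
    rw [mem_stabilizer_iff, of_eq_mk, smul_mk] at hg
    obtain ⟨k, hk⟩ := FreeRack.exists_zpow_of_eqvGen (Quotient.exact hg)
    have hk' : g * FreeGroup.of a ^ k = 1 := by simpa using hk.symm
    exact ⟨-k, (zpow_neg _ k).trans (eq_inv_of_mul_eq_one_left hk').symm⟩
  · rw [Subgroup.zpowers_le, mem_stabilizer_iff, ← toConj_of, ← act_eq_smul, Quandle.fix]

theorem stabilizer_eq_zpowers (x : FreeQuandle S) :
    stabilizer (FreeGroup S) x = Subgroup.zpowers (toConj x) := by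
  obtain ⟨g, a, rfl⟩ := exists_smul_of x
  rw [stabilizer_smul_eq_stabilizer_map_conj, stabilizer_of, MonoidHom.map_zpowers, toConj_smul,
    toConj_of]
  rfl

variable (φ : FreeQuandle S →◃ FreeQuandle T)

def groupHom : FreeGroup S →* FreeGroup T :=
  FreeGroup.lift fun a => toConj (φ (of a))

theorem apply_smul (g : FreeGroup S) (x : FreeQuandle S) : φ (g • x) = groupHom φ g • φ x := by
  induction g using FreeGroup.induction_on generalizing x with
  | C1 => rw [one_smul, map_one, one_smul]
  | of a =>
    rw [← toConj_of, ← act_eq_smul, ShelfHom.map_act, act_eq_smul, toConj_of, groupHom,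
      FreeGroup.lift_apply_of]
  | inv_of a ih =>
    rw [_root_.map_inv, eq_inv_smul_iff, ← ih, smul_inv_smul]
  | mul g h ihg ihh => rw [mul_smul, ihg, ihh, map_mul, mul_smul]

theorem toConj_apply (x : FreeQuandle S) : toConj (φ x) = groupHom φ (toConj x) := by
  obtain ⟨g, a, rfl⟩ := exists_smul_of x
  rw [apply_smul, toConj_smul, toConj_smul, toConj_of, map_mul, map_mul, _root_.map_inv, groupHom,
    FreeGroup.lift_apply_of]

theorem stabilizer_apply (x : FreeQuandle S) :
    stabilizer (FreeGroup T) (φ x) = (stabilizer (FreeGroup S) x).map (groupHom φ) := by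
  rw [stabilizer_eq_zpowers, stabilizer_eq_zpowers, MonoidHom.map_zpowers, toConj_apply]

theorem injective_of_injective_groupHom (hψ : Injective (groupHom φ))
    (hfst : Injective (fst ∘ φ ∘ of)) : Injective φ := by
  intro x y hxy
  obtain ⟨g, a, rfl⟩ := exists_smul_of x
  obtain ⟨h, b, rfl⟩ := exists_smul_of y
  rw [apply_smul, apply_smul] at hxy
  obtain rfl : a = b := hfst (by simpa only [fst_smul, comp_apply] using congrArg fst hxy)
  have hmem : groupHom φ (h⁻¹ * g) ∈ stabilizer (FreeGroup T) (φ (of a)) := by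
    rw [mem_stabilizer_iff, map_mul, _root_.map_inv, mul_smul, hxy, inv_smul_smul]
  rw [stabilizer_apply, Subgroup.mem_map_iff_mem hψ, mem_stabilizer_iff, mul_smul,
    inv_smul_eq_iff] at hmem
  exact hmem

theorem surjective_groupHom (hφ : Surjective φ) : Surjective (groupHom φ) := by
  rw [← MonoidHom.range_eq_top, eq_top_iff, ← FreeGroup.closure_range_of, Subgroup.closure_le]
  rintro _ ⟨t, rfl⟩
  obtain ⟨x, hx⟩ := hφ (of t)
  exact ⟨toConj x, by rw [← toConj_apply, hx, toConj_of]⟩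

theorem surjective_fst_comp (hφ : Surjective φ) : Surjective (fst ∘ φ ∘ of) := by
  intro t
  obtain ⟨x, hx⟩ := hφ (of t)
  obtain ⟨g, a, rfl⟩ := exists_smul_of x
  refine ⟨a, ?_⟩
  simpa only [apply_smul, fst_smul, fst_of, comp_apply] using congrArg fst hx

end FreeQuandle

/-- Every finitely generated free quandle is Hopfian: each surjective
endomorphism of the free quandle on a finite set is injective. -/
theorem fg_free_quandle_hopfian (S : Type) [Fintype S]
    (φ : FreeQuandle S →◃ FreeQuandle S) (hφ : Function.Surjective φ) :
    Function.Injective φ :=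
  FreeQuandle.injective_of_injective_groupHom φ
    (Group.ResiduallyFinite.injective_of_surjective (FreeQuandle.surjective_groupHom φ hφ))
    (Finite.injective_iff_surjective.mpr (FreeQuandle.surjective_fst_comp φ hφ))
end

section
/- Let H be a subgroup of a group G and z an element of the centralizer of H in G. Then the set G/H of right cosets with operation Hx * Hy = H z⁻¹ x y⁻¹ z y is a quandle. -/
open Quandles

/-!
Writing `σ` for conjugation by `z⁻¹`, the operation is `Hx ◃ Hy = H σ(x y⁻¹) y`. For any
automorphism `σ` of `G`, the rule `y ◃ x = σ(x y⁻¹) y` is a quandle on `G` itself, with inverse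
action `σ⁻¹(x y⁻¹) y`; and when `σ` fixes `H` pointwise (which is exactly `z ∈ C_G(H)`), both
actions respect right cosets, since `σ(h x y⁻¹ k⁻¹) k y = h σ(x y⁻¹) y` for `h, k ∈ H`.
The quandle axioms then pass to the quotient.
-/

namespace Quandle

variable {α : Type*}

abbrev quotient (q : Quandle α) (s : Setoid α)
    (hact : ∀ ⦃a₁ a₂⦄, a₁ ≈ a₂ → ∀ ⦃b₁ b₂⦄, b₁ ≈ b₂ → q.act a₁ b₁ ≈ q.act a₂ b₂)
    (hinvAct : ∀ ⦃a₁ a₂⦄, a₁ ≈ a₂ → ∀ ⦃b₁ b₂⦄, b₁ ≈ b₂ → q.invAct a₁ b₁ ≈ q.invAct a₂ b₂) :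
    Quandle (Quotient s) where
  act := Quotient.map₂ q.act hact
  invAct := Quotient.map₂ q.invAct hinvAct
  self_distrib := by
    rintro ⟨x⟩ ⟨y⟩ ⟨w⟩
    exact congrArg _ q.self_distrib
  left_inv := by
    rintro ⟨x⟩ ⟨y⟩
    exact congrArg _ (q.left_inv x y)
  right_inv := by
    rintro ⟨x⟩ ⟨y⟩
    exact congrArg _ (q.right_inv x y)
  fix := by
    rintro ⟨x⟩
    exact congrArg _ q.fix

theorem quotient_act_mk (q : Quandle α) (s : Setoid α) hact hinvAct (y x : α) :
    @Shelf.act _ (q.quotient s hact hinvAct).toShelf ⟦y⟧ ⟦x⟧ = ⟦q.act y x⟧ :=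
  rfl

variable {G : Type*} [Group G]

abbrev ofMulAut (σ : G ≃* G) : Quandle G where
  act y x := σ (x * y⁻¹) * y
  invAct y x := σ.symm (x * y⁻¹) * y
  self_distrib := by
    intro x y w
    simp only [map_mul, map_inv]
    group
  left_inv y x := by
    simp only [map_mul, map_inv, MulEquiv.symm_apply_apply]
    group
  right_inv y x := by
    simp only [map_mul, map_inv, MulEquiv.apply_symm_apply]
    group
  fix := by
    intro x
    simp

theorem ofMulAut_act (σ : G ≃* G) (y x : G) :
    @Shelf.act _ (ofMulAut σ).toShelf y x = σ (x * y⁻¹) * y :=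
  rfl

theorem ofMulAut_act_rightRel {σ : G ≃* G} {H : Subgroup G} (hσ : ∀ h ∈ H, σ h = h)
    ⦃y₁ y₂ : G⦄ (hy : QuotientGroup.rightRel H y₁ y₂) ⦃x₁ x₂ : G⦄
    (hx : QuotientGroup.rightRel H x₁ x₂) :
    QuotientGroup.rightRel H ((ofMulAut σ).act y₁ x₁) ((ofMulAut σ).act y₂ x₂) := by
  rw [QuotientGroup.rightRel_apply] at hx hy ⊢
  have key : σ (x₂ * y₂⁻¹) * y₂ * (σ (x₁ * y₁⁻¹) * y₁)⁻¹ = x₂ * x₁⁻¹ :=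
    calc σ (x₂ * y₂⁻¹) * y₂ * (σ (x₁ * y₁⁻¹) * y₁)⁻¹
        = σ (x₂ * y₂⁻¹) * σ (y₂ * y₁⁻¹) * (σ (x₁ * y₁⁻¹))⁻¹ := by rw [hσ _ hy]; group
      _ = σ (x₂ * x₁⁻¹) := by simp only [← map_inv, ← map_mul]; congr 1; group
      _ = x₂ * x₁⁻¹ := hσ _ hx
  exact key ▸ hx

end Quandle

/-- If `H` is a subgroup of `G` and `z` centralizes `H`, then the set of right
cosets `G/H` carries a quandle structure with operation
`Hx * Hy = H z⁻¹ x y⁻¹ z y` (here written with the acting coset second). -/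
theorem coset_quandle_exists (G : Type*) [Group G] (H : Subgroup G) (z : G)
    (hz : z ∈ Subgroup.centralizer (H : Set G)) :
    ∃ q : Quandle (Quotient (QuotientGroup.rightRel H)),
      ∀ x y : G,
        @Shelf.act _ q.toShelf
            (Quotient.mk (QuotientGroup.rightRel H) y)
            (Quotient.mk (QuotientGroup.rightRel H) x)
          = Quotient.mk (QuotientGroup.rightRel H) (z⁻¹ * x * y⁻¹ * z * y) := by
  set σ := MulAut.conj z⁻¹
  have hσ : ∀ h ∈ H, σ h = h := fun h hh => by
    rw [MulAut.conj_apply, inv_inv, mul_assoc, Subgroup.mem_centralizer_iff.mp hz h hh,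
      inv_mul_cancel_left]
  have hσ_symm : ∀ h ∈ H, σ.symm h = h := fun h hh => σ.symm_apply_eq.mpr (hσ h hh).symm
  -- the inverse action of `ofMulAut σ` is, by definition, the action of `ofMulAut σ.symm`
  refine ⟨(Quandle.ofMulAut σ).quotient _ (Quandle.ofMulAut_act_rightRel hσ)
    (Quandle.ofMulAut_act_rightRel hσ_symm), fun x y => ?_⟩
  rw [Quandle.quotient_act_mk, Quandle.ofMulAut_act, MulAut.conj_apply, inv_inv]
  group
end

section
/- Let H be a subgroup of a group G and z ∈ C_G(H). If H is finitely separable in G, then the coset quandle (G/H, z) with operation Hx * Hy = H z⁻¹ x y⁻¹ z y is a residually finite quandle. -/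
open Quandles

/-- A subgroup `H` of a group `G` is finitely separable if every element
outside `H` can be separated from `H` by a homomorphism to a finite group. -/
def FinitelySeparable {G : Type*} [Group G] (H : Subgroup G) : Prop :=
  ∀ g : G, g ∉ H →
    ∃ (F : Type) (_ : Group F) (_ : Fintype F) (φ : G →* F), φ g ∉ φ '' (H : Set G)

/-!
Since `φ z` centralizes `φ(H)` for any homomorphism `φ : G →* F`, the coset quandle
`(F/φ(H), φ z)` exists, and `φ` induces a quandle map `(G/H, z) → (F/φ(H), φ z)` under which
`Hx` and `Hy` have the same image exactly when `φ (y x⁻¹) ∈ φ(H)`. So if `φ` separates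
`y x⁻¹ ∉ H` from `H` and `F` is finite, this map separates `Hx` from `Hy` in a finite quandle.
-/

open QuotientGroup

namespace CosetQuandle

section Group

variable {K : Type*} [Group K] {N : Subgroup K} {ζ : K}

theorem inv_mul_mul_eq_of_mul_inv_mem (hζ : ζ ∈ Subgroup.centralizer (N : Set K)) {u u' : K}
    (h : u' * u⁻¹ ∈ N) : u'⁻¹ * ζ * u' = u⁻¹ * ζ * u := by
  have hc : u' * u⁻¹ * ζ = ζ * (u' * u⁻¹) := Subgroup.mem_centralizer_iff.mp hζ _ h
  calc u'⁻¹ * ζ * u' = u⁻¹ * ((u' * u⁻¹)⁻¹ * (ζ * (u' * u⁻¹))) * u := by group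
    _ = u⁻¹ * ζ * u := by rw [← hc]; group

theorem inv_mul_mul_mem (hζ : ζ ∈ Subgroup.centralizer (N : Set K)) {n : K} (hn : n ∈ N) :
    ζ⁻¹ * n * ζ ∈ N := by
  rwa [mul_assoc, Subgroup.mem_centralizer_iff.mp hζ n hn, inv_mul_cancel_left]

variable (N) in
/-- The operation of the coset quandle `(K/N, ζ)`, with the acting coset first. -/
def act (hζ : ζ ∈ Subgroup.centralizer (N : Set K)) :
    Quotient (rightRel N) → Quotient (rightRel N) → Quotient (rightRel N) :=
  Quotient.map₂ (fun u v => ζ⁻¹ * v * u⁻¹ * ζ * u) fun u u' hu v v' hv => by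
    replace hu := rightRel_apply.mp hu
    replace hv := rightRel_apply.mp hv
    apply rightRel_apply.mpr
    have hconj := inv_mul_mul_eq_of_mul_inv_mem hζ hu
    have : ζ⁻¹ * v' * u'⁻¹ * ζ * u' * (ζ⁻¹ * v * u⁻¹ * ζ * u)⁻¹ = ζ⁻¹ * (v' * v⁻¹) * ζ := by
      calc _ = ζ⁻¹ * v' * (u'⁻¹ * ζ * u') * (u⁻¹ * ζ * u)⁻¹ * v⁻¹ * ζ := by group
        _ = ζ⁻¹ * (v' * v⁻¹) * ζ := by rw [hconj]; group
    rw [this]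
    exact inv_mul_mul_mem hζ hv

theorem act_mk (hζ : ζ ∈ Subgroup.centralizer (N : Set K)) (u v : K) :
    act N hζ (Quotient.mk _ u) (Quotient.mk _ v) = Quotient.mk _ (ζ⁻¹ * v * u⁻¹ * ζ * u) :=
  rfl

variable (N) in
@[reducible] def quandle (hζ : ζ ∈ Subgroup.centralizer (N : Set K)) :
    Quandle (Quotient (rightRel N)) where
  act := act N hζ
  self_distrib {a b c} := by
    induction a, b, c using Quotient.inductionOn₃
    simp only [act_mk]
    congr 1
    group
  invAct := act N (Subgroup.inv_mem _ hζ)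
  left_inv a b := by
    induction a, b using Quotient.inductionOn₂
    simp only [act_mk]
    congr 1
    group
  right_inv a b := by
    induction a, b using Quotient.inductionOn₂
    simp only [act_mk]
    congr 1
    group
  fix {a} := by
    induction a using Quotient.inductionOn
    simp only [act_mk]
    congr 1
    group

end Group

section Map

variable {G F : Type*} [Group G] [Group F] {H : Subgroup G} {z : G}

theorem map_mem_centralizer (φ : G →* F) (hz : z ∈ Subgroup.centralizer (H : Set G)) :
    φ z ∈ Subgroup.centralizer (H.map φ : Set F) := by
  rw [Subgroup.coe_map]
  exact Subgroup.map_centralizer_le_centralizer_image _ φ ⟨z, hz, rfl⟩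

def map (φ : G →* F) : Quotient (rightRel H) → Quotient (rightRel (H.map φ)) :=
  Quotient.map φ fun u v huv => by
    apply rightRel_apply.mpr
    rw [← map_inv, ← map_mul]
    exact Subgroup.mem_map_of_mem φ (rightRel_apply.mp huv)

theorem map_mk (φ : G →* F) (u : G) :
    map (H := H) φ (Quotient.mk _ u) = Quotient.mk _ (φ u) :=
  rfl

theorem map_mk_eq_map_mk_iff (φ : G →* F) (u v : G) :
    map (H := H) φ (Quotient.mk _ u) = map φ (Quotient.mk _ v) ↔ φ (v * u⁻¹) ∈ H.map φ := by
  rw [map_mk, map_mk, Quotient.eq, rightRel_apply, map_mul, map_inv]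

theorem map_act (φ : G →* F) (hz : z ∈ Subgroup.centralizer (H : Set G))
    (a b : Quotient (rightRel H)) :
    map φ (act H hz a b) = act (H.map φ) (map_mem_centralizer φ hz) (map φ a) (map φ b) := by
  induction a, b using Quotient.inductionOn₂
  simp only [act_mk, map_mk, map_mul, map_inv]

end Map

end CosetQuandle

open CosetQuandle in
/-- If `H` is a finitely separable subgroup of `G` and `z` centralizes `H`,
then the coset quandle `(G/H, z)`, i.e. the set of right cosets with operation
`Hx * Hy = H z⁻¹ x y⁻¹ z y` (written here with the acting coset second), is a
residually finite quandle. -/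
theorem coset_quandle_residually_finite (G : Type*) [Group G] (H : Subgroup G)
    (z : G) (hz : z ∈ Subgroup.centralizer (H : Set G))
    (hsep : FinitelySeparable H)
    (q : Quandle (Quotient (QuotientGroup.rightRel H)))
    (hq : ∀ x y : G,
      @Shelf.act _ q.toShelf
          (Quotient.mk (QuotientGroup.rightRel H) y)
          (Quotient.mk (QuotientGroup.rightRel H) x)
        = Quotient.mk (QuotientGroup.rightRel H) (z⁻¹ * x * y⁻¹ * z * y)) :
    @ResiduallyFiniteQuandle _ q := by
  have hact : @Shelf.act _ q.toShelf = act H hz := by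
    funext a b
    induction a, b using Quotient.inductionOn₂ with
    | h y x => exact hq x y
  intro a b hab
  induction a, b using Quotient.inductionOn₂ with | h u v => ?_
  have hvu : v * u⁻¹ ∉ H := fun h => hab (Quotient.sound (rightRel_apply.mpr h))
  obtain ⟨F, _, _, φ, hφ⟩ := hsep _ hvu
  let := quandle (H.map φ) (map_mem_centralizer φ hz)
  let f : Quotient (rightRel H) →◃ Quotient (rightRel (H.map φ)) :=
    ⟨map φ, fun {a b} => by rw [hact]; exact map_act φ hz a b⟩
  classical
  exact ⟨_, inferInstance, inferInstance, f, fun h => hφ ((map_mk_eq_map_mk_iff φ u v).mp h)⟩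
end

section
/- Let X be a residually finite quandle and α an automorphism of X whose fixed-point set Fix(α) = {x ∈ X : α(x) = x} is non-empty. Then Fix(α) is a finitely separable subquandle of X: for each x ∈ X \ Fix(α) there is a finite quandle F and a quandle homomorphism φ : X → F with φ(x) ∉ φ(Fix(α)). -/
open Quandles

/-
If `α x ≠ x`, residual finiteness gives `φ : X → F` with `φ x ≠ φ (α x)`. The
homomorphism `z ↦ (φ z, φ (α z))` into the finite quandle `F × F` sends every fixed point of `α`
to the diagonal, but sends `x` off it.
-/

section Product

variable {A B S : Type*}

instance Shelf.prod [Shelf A] [Shelf B] : Shelf (A × B) where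
  act p q := (p.1 ◃ q.1, p.2 ◃ q.2)
  self_distrib := Prod.ext Shelf.self_distrib Shelf.self_distrib

instance Rack.prod [Rack A] [Rack B] : Rack (A × B) where
  invAct p q := (p.1 ◃⁻¹ q.1, p.2 ◃⁻¹ q.2)
  left_inv p q := Prod.ext (Rack.left_inv p.1 q.1) (Rack.left_inv p.2 q.2)
  right_inv p q := Prod.ext (Rack.right_inv p.1 q.1) (Rack.right_inv p.2 q.2)

instance Quandle.prod [Quandle A] [Quandle B] : Quandle (A × B) where
  fix := Prod.ext Quandle.fix Quandle.fix

def ShelfHom.prod [Shelf S] [Shelf A] [Shelf B] (f : S →◃ A) (g : S →◃ B) : S →◃ A × B where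
  toFun z := (f z, g z)
  map_act' := Prod.ext f.map_act g.map_act

@[simp]
theorem ShelfHom.prod_apply [Shelf S] [Shelf A] [Shelf B] (f : S →◃ A) (g : S →◃ B) (z : S) :
    f.prod g z = (f z, g z) :=
  rfl

end Product

theorem ShelfHom.prod_comp_not_mem_image_fixedPoints {X F : Type*} [Shelf X] [Shelf F]
    (φ : X →◃ F) (α : X →◃ X) {x : X} (hx : φ x ≠ φ (α x)) :
    φ.prod (φ.comp α) x ∉ φ.prod (φ.comp α) '' {y | α y = y} := by
  rintro ⟨y, hy : α y = y, hyx⟩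
  obtain ⟨h₁, h₂⟩ := Prod.ext_iff.mp hyx
  simp only [ShelfHom.prod_apply, ShelfHom.comp_apply, hy] at h₁ h₂
  exact hx (h₁ ▸ h₂)

theorem fix_finitely_separable_general (X : Type*) [Quandle X]
    (hX : ResiduallyFiniteQuandle X) (α : X ≃ X)
    (hα : ∀ x y : X, α (x ◃ y) = α x ◃ α y) :
    ∀ x : X, x ∉ {x : X | α x = x} →
      ∃ (F : Type) (_ : Quandle F) (_ : Fintype F) (φ : X →◃ F),
        φ x ∉ φ '' {x : X | α x = x} := by
  intro x hx
  obtain ⟨F, _, _, φ, hφ⟩ := hX x (α x) (Ne.symm hx)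
  let αHom : X →◃ X := ⟨α, hα _ _⟩
  exact ⟨F × F, inferInstance, inferInstance, φ.prod (φ.comp αHom),
    φ.prod_comp_not_mem_image_fixedPoints αHom hφ⟩

/-- If `X` is a residually finite quandle and `α` is a quandle automorphism of
`X` with non-empty fixed-point set, then `Fix(α)` is a finitely separable
subquandle of `X`: every element outside `Fix(α)` can be separated from it by
a quandle homomorphism into a finite quandle. -/
theorem fix_finitely_separable (X : Type*) [Quandle X]
    (hX : ResiduallyFiniteQuandle X) (α : X ≃ X)
    (hα : ∀ x y : X, α (x ◃ y) = α x ◃ α y)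
    (hfix : {x : X | α x = x}.Nonempty) :
    ∀ x : X, x ∉ {x : X | α x = x} →
      ∃ (F : Type) (_ : Quandle F) (_ : Fintype F) (φ : X →◃ F),
        φ x ∉ φ '' {x : X | α x = x} :=
  fix_finitely_separable_general X hX α hα
end
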